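/- arXiv:2407.12868 — 7 statements merged into one kernel-verified Lean document; each statement's English description precedes it below -/
import Mathlib

section
/- For every natural number N ≥ 1 and every n ≥ 0, the sum of the 4N consecutive Pell numbers P(n), P(n+1), ..., P(n+4N-1) equals ((a^{2N} - b^{2N})/√2) · P(n+2N), where a = 1+√2 and b = 1-√2; since the constant (a^{2N}-b^{2N})/√2 equals 2·P(2N), equivalently ∑_{i=0}^{4N-1} P(n+i) = 2·P(2N)·P(n+2N). -/
theorem pell_sum_4N (P : ℕ → ℝ)
    (h0 : P 0 = 0) (h1 : P 1 = 1)
    (hrec : ∀ n, P (n + 2) = 2 * P (n + 1) + P n)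
    (N n : ℕ) (hN : 1 ≤ N) :
    (∑ i ∈ Finset.range (4 * N), P (n + i)) =
      (((1 + Real.sqrt 2) ^ (2 * N) - (1 - Real.sqrt 2) ^ (2 * N)) / Real.sqrt 2)
        * P (n + 2 * N) ∧
    (∑ i ∈ Finset.range (4 * N), P (n + i)) = 2 * P (2 * N) * P (n + 2 * N) := by
  set s := Real.sqrt 2 with hsdef
  have hs2 : s ^ 2 = 2 := Real.sq_sqrt (by norm_num)
  have hspos : 0 < s := Real.sqrt_pos.mpr (by norm_num)
  have hsne : s ≠ 0 := ne_of_gt hspos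
  have binet : ∀ m, 2 * s * P m = (1 + s) ^ m - (1 - s) ^ m := by
    intro m
    induction m using Nat.twoStepInduction with
    | zero => simp [h0]
    | one => simp [h1]; ring
    | more k ih1 ih2 =>
      rw [hrec]
      linear_combination 2 * ih2 + ih1 + ((1 - s) ^ k - (1 + s) ^ k) * hs2
  have hab : (1 + s) * (1 - s) = -1 := by linear_combination -hs2
  have habN : ((1 + s) * (1 - s)) ^ (2 * N) = 1 := by
    rw [hab, pow_mul]; simp
  have habN' : ((1 - s) * (1 + s)) ^ (2 * N) = 1 := by
    rw [mul_comm]; exact habN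
  have hga : (∑ i ∈ Finset.range (4 * N), (1 + s) ^ i) * ((1 + s) - 1)
      = (1 + s) ^ (4 * N) - 1 := geom_sum_mul _ _
  have hgb : (∑ i ∈ Finset.range (4 * N), (1 - s) ^ i) * ((1 - s) - 1)
      = (1 - s) ^ (4 * N) - 1 := geom_sum_mul _ _
  have hS1 : 2 * s * (∑ i ∈ Finset.range (4 * N), P (n + i)) =
      (1 + s) ^ n * (∑ i ∈ Finset.range (4 * N), (1 + s) ^ i)
        - (1 - s) ^ n * (∑ i ∈ Finset.range (4 * N), (1 - s) ^ i) := by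
    rw [Finset.mul_sum, Finset.mul_sum, Finset.mul_sum, ← Finset.sum_sub_distrib]
    refine Finset.sum_congr rfl fun i _ => ?_
    rw [binet (n + i), pow_add, pow_add]
  have h4S : 4 * (∑ i ∈ Finset.range (4 * N), P (n + i)) =
      (1 + s) ^ (n + 4 * N) + (1 - s) ^ (n + 4 * N) - (1 + s) ^ n - (1 - s) ^ n := by
    rw [pow_add, pow_add]
    linear_combination (-2) * (∑ i ∈ Finset.range (4 * N), P (n + i)) * hs2 + s * hS1
      + (1 + s) ^ n * hga + (1 - s) ^ n * hgb
  have hb := binet (n + 2 * N)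
  have expand : ((1 + s) ^ (2 * N) - (1 - s) ^ (2 * N)) *
      ((1 + s) ^ (n + 2 * N) - (1 - s) ^ (n + 2 * N)) =
      (1 + s) ^ (n + 4 * N) + (1 - s) ^ (n + 4 * N) - (1 + s) ^ n - (1 - s) ^ n := by
    have e1 : (1 + s) ^ (2 * N) * (1 - s) ^ (n + 2 * N) = (1 - s) ^ n := by
      rw [pow_add, mul_left_comm, ← mul_pow, habN, mul_one]
    have e2 : (1 - s) ^ (2 * N) * (1 + s) ^ (n + 2 * N) = (1 + s) ^ n := by
      rw [pow_add, mul_left_comm, ← mul_pow, habN', mul_one]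
    have e3 : (1 + s) ^ (2 * N) * (1 + s) ^ (n + 2 * N) = (1 + s) ^ (n + 4 * N) := by
      rw [← pow_add]; congr 1; omega
    have e4 : (1 - s) ^ (2 * N) * (1 - s) ^ (n + 2 * N) = (1 - s) ^ (n + 4 * N) := by
      rw [← pow_add]; congr 1; omega
    linear_combination e3 + e4 - e1 - e2
  have key : (∑ i ∈ Finset.range (4 * N), P (n + i)) =
      (((1 + s) ^ (2 * N) - (1 - s) ^ (2 * N)) / s) * P (n + 2 * N) := by
    rw [div_mul_eq_mul_div, eq_div_iff hsne]
    have hmul : (2 * s) * ((∑ i ∈ Finset.range (4 * N), P (n + i)) * s) =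
        (2 * s) * (((1 + s) ^ (2 * N) - (1 - s) ^ (2 * N)) * P (n + 2 * N)) := by
      linear_combination 2 * (∑ i ∈ Finset.range (4 * N), P (n + i)) * hs2 + h4S
        - ((1 + s) ^ (2 * N) - (1 - s) ^ (2 * N)) * hb - expand
    exact mul_left_cancel₀ (by positivity) hmul
  refine ⟨key, ?_⟩
  have hb2 := binet (2 * N)
  rw [key, ← hb2]
  field_simp
end

section
/- For all n ≥ 0 and N ≥ 1, the sum of 4N consecutive Fibonacci numbers satisfies ∑_{i=0}^{4N-1} F(n+i) = F(2N) · L(n+2N+1), where L is the Lucas sequence. -/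
/-!
Both sequences are pinned down by their recurrence and first two values, so `F = fib` and `L` is
the Lucas sequence. The sum of `m` consecutive Fibonacci numbers telescopes to
`F (n + m + 1) - F (n + 1)`, and Binet's formula, with `φ ψ = -1`, gives the identity
`F b * L (a + b) = F (a + 2 b) - (-1) ^ b * F a`; take `a = n + 1` and `b = 2 N`.
-/

open Finset Nat Real

theorem eq_of_fibonacci_recurrence {α : Type*} [Add α] {u v : ℕ → α}
    (hu : ∀ n, u (n + 2) = u (n + 1) + u n) (hv : ∀ n, v (n + 2) = v (n + 1) + v n)
    (h0 : u 0 = v 0) (h1 : u 1 = v 1) : u = v := by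
  funext n
  induction n using Nat.twoStepInduction with
  | zero => exact h0
  | one => exact h1
  | more n ih ih' => rw [hu, hv, ih, ih']

theorem sum_range_fib_add (n m : ℕ) :
    ∑ i ∈ range m, fib (n + i) + fib (n + 1) = fib (n + m + 1) := by
  rw [fib_succ_eq_succ_sum (n + m), sum_range_add, fib_succ_eq_succ_sum n]
  ring

def lucas : ℕ → ℕ
  | 0 => 2
  | 1 => 1
  | n + 2 => lucas (n + 1) + lucas n

theorem lucas_add_two (n : ℕ) : lucas (n + 2) = lucas (n + 1) + lucas n := rfl

theorem coe_lucas_eq (n : ℕ) : (lucas n : ℝ) = goldenRatio ^ n + goldenConj ^ n := by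
  induction n using Nat.twoStepInduction with
  | zero => norm_num [lucas]
  | one => simp [lucas, goldenRatio_add_goldenConj]
  | more n ih ih' =>
    rw [lucas_add_two, cast_add, ih, ih']
    linear_combination -(goldenRatio ^ n * goldenRatio_sq + goldenConj ^ n * goldenConj_sq)

theorem fib_mul_lucas_add (a b : ℕ) :
    (fib b * lucas (a + b) : ℝ) = fib (a + 2 * b) - (-1) ^ b * fib a := by
  rw [coe_fib_eq, coe_fib_eq, coe_fib_eq, coe_lucas_eq, ← goldenRatio_mul_goldenConj]
  -- otherwise `ring` unfolds `goldenRatio` and `goldenConj` and gets lost in `√5`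
  generalize goldenRatio = x, goldenConj = y
  ring

theorem fib_sum_4N_general (F L : ℕ → ℕ)
    (hF0 : F 0 = 0) (hF1 : F 1 = 1)
    (hFrec : ∀ n, F (n + 2) = F (n + 1) + F n)
    (hL0 : L 0 = 2) (hL1 : L 1 = 1)
    (hLrec : ∀ n, L (n + 2) = L (n + 1) + L n)
    (n N : ℕ) :
    (∑ i ∈ Finset.range (4 * N), F (n + i)) = F (2 * N) * L (n + 2 * N + 1) := by
  obtain rfl : F = fib :=
    eq_of_fibonacci_recurrence hFrec (fun n ↦ by rw [fib_add_two, add_comm]) hF0 hF1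
  obtain rfl : L = lucas := eq_of_fibonacci_recurrence hLrec lucas_add_two hL0 hL1
  have hsum := sum_range_fib_add n (4 * N)
  have hprod := fib_mul_lucas_add (n + 1) (2 * N)
  rw [pow_mul, neg_one_sq, one_pow, one_mul, show n + 1 + 2 * (2 * N) = n + 4 * N + 1 by ring,
    show n + 1 + 2 * N = n + 2 * N + 1 by ring, ← hsum] at hprod
  push_cast at hprod
  exact_mod_cast (by linarith :
    (∑ i ∈ range (4 * N), fib (n + i) : ℝ) = fib (2 * N) * lucas (n + 2 * N + 1))

theorem fib_sum_4N (F L : ℕ → ℕ)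
    (hF0 : F 0 = 0) (hF1 : F 1 = 1)
    (hFrec : ∀ n, F (n + 2) = F (n + 1) + F n)
    (hL0 : L 0 = 2) (hL1 : L 1 = 1)
    (hLrec : ∀ n, L (n + 2) = L (n + 1) + L n)
    (n N : ℕ) (hN : 1 ≤ N) :
    (∑ i ∈ Finset.range (4 * N), F (n + i)) = F (2 * N) * L (n + 2 * N + 1) :=
  fib_sum_4N_general F L hF0 hF1 hFrec hL0 hL1 hLrec n N
end

section
/- For all n ≥ 0 and N ≥ 0, the sum of 4N+2 consecutive Fibonacci numbers satisfies ∑_{i=0}^{4N+1} F(n+i) = L(2N+1) · F(n+2N+2). -/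
/-! Since `∑ i < j, F i = F (j + 1) - 1`, the sum equals `F (m + k) - F (m - k)` with
`m = n + 2N + 2` and `k = 2N + 1`. Over the integers the addition formula
`F (m + k) = F (m - 1) F k + F m F (k + 1)` also holds for negative `k`, and `F (-k) = (-1)^(k+1) F k`;
for odd `k` the two expansions combine to
`F (m + k) - F (m - k) = (F (k - 1) + F (k + 1)) F m = L k F m`. -/

open Finset

theorem eq_of_fib_recurrence {R : Type*} [Add R] {u v : ℕ → R}
    (hu : ∀ n, u (n + 2) = u (n + 1) + u n) (hv : ∀ n, v (n + 2) = v (n + 1) + v n)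
    (h0 : u 0 = v 0) (h1 : u 1 = v 1) : u = v := by
  funext n
  induction n using Nat.twoStepInduction with
  | zero => exact h0
  | one => exact h1
  | more n ih0 ih1 => rw [hu, hv, ih0, ih1]

theorem Nat.sum_range_fib_add_add_fib_succ (n k : ℕ) :
    ∑ i ∈ range k, fib (n + i) + fib (n + 1) = fib (n + k + 1) := by
  rw [fib_succ_eq_succ_sum, fib_succ_eq_succ_sum, sum_range_add]
  ring

namespace Int

/-- Indexing over `ℤ` makes `L 0 = F (-1) + F 1 = 2` fit the same formula. -/
def lucas (n : ℤ) : ℤ := fib (n - 1) + fib (n + 1)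

@[simp] theorem lucas_zero : lucas 0 = 2 := rfl

@[simp] theorem lucas_one : lucas 1 = 1 := rfl

theorem lucas_add_two (n : ℤ) : lucas (n + 2) = lucas (n + 1) + lucas n := by
  rw [lucas, lucas, lucas, show n + 2 - 1 = n - 1 + 2 by ring, show n + 2 + 1 = n + 1 + 2 by ring,
    fib_add_two, fib_add_two, add_sub_cancel_right, sub_add_cancel, add_assoc n 1 1, one_add_one_eq_two]
  ring

theorem fib_add_sub_fib_sub_of_odd (m : ℤ) {k : ℤ} (hk : Odd k) :
    fib (m + k) - fib (m - k) = lucas k * fib m := by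
  have h_neg : fib (-k) = fib k := by simp [fib_neg, Int.not_even_iff_odd.mpr hk]
  have h_neg_succ : fib (-k + 1) = -fib (k - 1) := by
    rw [show -k + 1 = -(k - 1) by ring, fib_neg, if_pos (hk.sub_odd odd_one)]
  have h_sub : fib (m - k) = fib (m - 1) * fib k - fib m * fib (k - 1) := by
    rw [sub_eq_add_neg, fib_add, h_neg, h_neg_succ]
    ring
  rw [fib_add, h_sub, lucas]
  ring

end Int

theorem fib_sum_4N_plus_2 (F L : ℕ → ℕ)
    (hF0 : F 0 = 0) (hF1 : F 1 = 1)
    (hFrec : ∀ n, F (n + 2) = F (n + 1) + F n)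
    (hL0 : L 0 = 2) (hL1 : L 1 = 1)
    (hLrec : ∀ n, L (n + 2) = L (n + 1) + L n)
    (n N : ℕ) :
    (∑ i ∈ Finset.range (4 * N + 2), F (n + i)) = L (2 * N + 1) * F (n + 2 * N + 2) := by
  have hF : F = Nat.fib :=
    eq_of_fib_recurrence hFrec (fun n ↦ by rw [Nat.fib_add_two, add_comm]) hF0 hF1
  have hL : ∀ k : ℕ, (L k : ℤ) = Int.lucas k :=
    congrFun <| eq_of_fib_recurrence (u := fun k ↦ (L k : ℤ)) (v := fun k : ℕ ↦ Int.lucas k)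
      (fun n ↦ by simp [hLrec]) (fun n ↦ by push_cast; exact Int.lucas_add_two n)
      (by simp [hL0]) (by simp [hL1])
  have h_sum := Nat.sum_range_fib_add_add_fib_succ n (4 * N + 2)
  have h_odd : (Nat.fib (n + (4 * N + 2) + 1) : ℤ) - Nat.fib (n + 1) =
      L (2 * N + 1) * Nat.fib (n + 2 * N + 2) := by
    have h := Int.fib_add_sub_fib_sub_of_odd (n + 2 * N + 2 : ℕ) (k := (2 * N + 1 : ℕ))
      (by simp [parity_simps])
    rwa [← Nat.cast_add, show n + 2 * N + 2 + (2 * N + 1) = n + (4 * N + 2) + 1 by ring,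
      show ((n + 2 * N + 2 : ℕ) : ℤ) - (2 * N + 1 : ℕ) = (n + 1 : ℕ) by push_cast; ring,
      Int.fib_natCast, Int.fib_natCast, Int.fib_natCast, ← hL] at h
  subst hF
  zify at h_sum ⊢
  linear_combination h_sum + h_odd
end

section
/- Let r ≥ 1 and define f(0)=0, f(1)=1, f(n)=r·f(n-1)+f(n-2), and g(0)=2, g(1)=r, g(n)=r·g(n-1)+g(n-2). Then for all N ≥ 0 and n ≥ 0, r · ∑_{k=0}^{4N+1} f(n+k) = g(2N+1) · (f(n+2N+1) + f(n+2N)). -/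
/-!
Telescoping `r u(m+1) = u(m+2) - u(m)` turns `r` times the sum into a difference of values of
`s(m) = u(m+1) + u(m)`, and for odd `j` the identity `u(b + 2j) - u(b) = g(j) u(b + j)`, applied at
`b` and `b + 1`, rewrites that difference as `g(j) s(n + j)`. Since the sum starts at `f(n)`, it is
run on `f` extended one step backwards by `f(-1) = 1`, which still satisfies the recurrence.
-/

open Finset

variable {R : Type*} [CommRing R]

def SatisfiesLucasRec (r : R) (u : ℕ → R) : Prop :=
  ∀ n, u (n + 2) = r * u (n + 1) + u n

namespace SatisfiesLucasRec

variable {r : R} {u g : ℕ → R}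

theorem mul_sum_range_eq_sub (hu : SatisfiesLucasRec r u) (n M : ℕ) :
    r * ∑ k ∈ range M, u (n + k + 1) = (u (n + M + 1) + u (n + M)) - (u (n + 1) + u n) := by
  have step (k : ℕ) : r * u (n + k + 1) =
      (u (n + (k + 1) + 1) + u (n + (k + 1))) - (u (n + k + 1) + u (n + k)) := by
    rw [show n + (k + 1) + 1 = n + k + 2 by omega, ← add_assoc, hu]
    ring
  rw [mul_sum, sum_congr rfl fun k _ => step k, sum_range_sub (fun k => u (n + k + 1) + u (n + k))]
  simp

theorem add_neg_one_pow_mul_eq (hu : SatisfiesLucasRec r u) (hg : SatisfiesLucasRec r g)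
    (hg0 : g 0 = 2) (hg1 : g 1 = r) (j : ℕ) :
    ∀ b, u (b + 2 * j) + (-1) ^ j * u b = g j * u (b + j) := by
  induction j using Nat.twoStepInduction with
  | zero => intro b; simp only [hg0, mul_zero, add_zero, pow_zero]; ring
  | one => intro b; simp only [hg1]; linear_combination hu b
  | more j ih₀ ih₁ =>
    intro b
    linear_combination (norm := ring_nf) r * ih₁ (b + 1) + ih₀ (b + 2) + hu (b + 2 * j + 2)
      - (-1) ^ j * hu b - hg j * u (b + j + 2)

theorem mul_sum_range_two_mul_of_odd (hu : SatisfiesLucasRec r u) (hg : SatisfiesLucasRec r g)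
    (hg0 : g 0 = 2) (hg1 : g 1 = r) {j : ℕ} (hj : Odd j) (n : ℕ) :
    r * ∑ k ∈ range (2 * j), u (n + k + 1) = g j * (u (n + j + 1) + u (n + j)) := by
  have key (b : ℕ) : u (b + 2 * j) - u b = g j * u (b + j) := by
    simpa [hj.neg_one_pow, sub_eq_add_neg] using add_neg_one_pow_mul_eq hu hg hg0 hg1 j b
  rw [mul_sum_range_eq_sub hu]
  linear_combination (norm := ring_nf) key (n + 1) + key n

end SatisfiesLucasRec

theorem lucas_seq_sum_4N_plus_2_general (r : ℕ) (f g : ℕ → ℕ)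
    (hf0 : f 0 = 0) (hf1 : f 1 = 1)
    (hfrec : ∀ n, f (n + 2) = r * f (n + 1) + f n)
    (hg0 : g 0 = 2) (hg1 : g 1 = r)
    (hgrec : ∀ n, g (n + 2) = r * g (n + 1) + g n)
    (N n : ℕ) :
    r * (∑ k ∈ Finset.range (4 * N + 2), f (n + k)) =
      g (2 * N + 1) * (f (n + 2 * N + 1) + f (n + 2 * N)) := by
  let F : ℕ → ℤ := fun | 0 => 1 | k + 1 => f k
  have hF : SatisfiesLucasRec (r : ℤ) F := by
    rintro (_ | k)
    · simp [F, hf0, hf1]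
    · simp [F, hfrec]
  have hG : SatisfiesLucasRec (r : ℤ) (fun k => (g k : ℤ)) := fun k => by simp [hgrec]
  have := hF.mul_sum_range_two_mul_of_odd hG (by simp [hg0]) (by simp [hg1]) (odd_two_mul_add_one N) n
  rw [show 2 * (2 * N + 1) = 4 * N + 2 by ring] at this
  simp only [F, add_assoc] at this
  exact_mod_cast this

theorem lucas_seq_sum_4N_plus_2 (r : ℕ) (hr : 1 ≤ r) (f g : ℕ → ℕ)
    (hf0 : f 0 = 0) (hf1 : f 1 = 1)
    (hfrec : ∀ n, f (n + 2) = r * f (n + 1) + f n)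
    (hg0 : g 0 = 2) (hg1 : g 1 = r)
    (hgrec : ∀ n, g (n + 2) = r * g (n + 1) + g n)
    (N n : ℕ) :
    r * (∑ k ∈ Finset.range (4 * N + 2), f (n + k)) =
      g (2 * N + 1) * (f (n + 2 * N + 1) + f (n + 2 * N)) :=
  lucas_seq_sum_4N_plus_2_general r f g hf0 hf1 hfrec hg0 hg1 hgrec N n
end

section
/- There is no positive integer c and function j : ℕ → ℕ such that for all n ≥ 0, P(n) + P(n+1) + P(n+2) = c · P(j(n)), where P is the Pell sequence. More generally, for every N ≥ 1, there is no constant c such that the sum of 2N+1 consecutive Pell numbers always equals c times some Pell number. -/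
/-!
Let `S n` be the sum of the `2N + 1` consecutive Pell numbers starting at `P n`. Since
`S n < S (n + 1) ≤ 4 S n` while `5 P k ≤ P (k + 2)`, an equation `S n = c P (j n)` for all `n`
forces `j 1 = j 0 + 1`; so `S 0 = c P m` and `S 1 = c P (m + 1)`, and `S 0 < P (2N + 1)` gives
`1 ≤ m ≤ 2N`. Both equations are linear in `c` by
`2 S n + P (n + 1) = P n + P (n + 2N) + P (n + 2N + 1)`; eliminating `c` leaves a Casoratian
of the two solutions `P` and `H k = P k + P (k + 1)` of the Pell recurrence, which
equals `(-1) ^ m H (2N - m)`, while the other side is `H (m - 1)`. As `H` is positive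
and strictly increasing, `m` is even and `2N - m = m - 1`, impossible by parity.
-/

open Finset

theorem casoratian_of_recurrence {R : Type*} [CommRing R] {r s : R} {x y : ℕ → R}
    (hx : ∀ n, x (n + 2) = r * x (n + 1) + s * x n)
    (hy : ∀ n, y (n + 2) = r * y (n + 1) + s * y n) (a b : ℕ) :
    x (a + 1) * y (a + b) - x a * y (a + b + 1) = (-s) ^ a * (x 1 * y b - x 0 * y (b + 1)) := by
  induction a with
  | zero => simp
  | succ a ih =>
    rw [show a + 1 + b + 1 = a + b + 2 by omega, show a + 1 + b = a + b + 1 by omega,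
      hx, hy, pow_succ', mul_assoc, ← ih]
    ring

def pell : ℕ → ℕ
  | 0 => 0
  | 1 => 1
  | n + 2 => 2 * pell (n + 1) + pell n

@[simp] theorem pell_zero : pell 0 = 0 := rfl

@[simp] theorem pell_one : pell 1 = 1 := rfl

theorem pell_add_two (n : ℕ) : pell (n + 2) = 2 * pell (n + 1) + pell n := rfl

theorem eq_pell {P : ℕ → ℕ} (h0 : P 0 = 0) (h1 : P 1 = 1)
    (hrec : ∀ n, P (n + 2) = 2 * P (n + 1) + P n) : P = pell := by
  funext n
  induction n using Nat.twoStepInduction with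
  | zero => exact h0
  | one => exact h1
  | more n ih ih' => rw [hrec, pell_add_two, ih, ih']

theorem pell_pos {n : ℕ} (hn : 0 < n) : 0 < pell n := by
  induction n using Nat.twoStepInduction with
  | zero => omega
  | one => decide
  | more n _ ih => rw [pell_add_two]; have := ih (by omega); omega

theorem pell_strictMono : StrictMono pell :=
  strictMono_nat_of_lt_succ fun n => by
    cases n with
    | zero => decide
    | succ n => rw [pell_add_two]; have := pell_pos (n := n + 1) (by omega); omega

theorem five_mul_pell_le (n : ℕ) : 5 * pell n ≤ pell (n + 2) := by
  cases n with
  | zero => decide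
  | succ n =>
    rw [pell_add_two, pell_add_two]
    have := pell_strictMono.monotone (Nat.le_add_right n 1)
    omega

theorem pell_add_two_le (n : ℕ) : pell (n + 2) ≤ 3 * pell (n + 1) := by
  rw [pell_add_two]; have := pell_strictMono.monotone (Nat.le_add_right n 1); omega

def pellWindow (L n : ℕ) : ℕ := ∑ i ∈ range L, pell (n + i)

theorem pell_le_pellWindow {L i : ℕ} (n : ℕ) (hi : i < L) : pell (n + i) ≤ pellWindow L n :=
  single_le_sum (f := fun i => pell (n + i)) (fun _ _ => Nat.zero_le _) (mem_range.2 hi)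

theorem pellWindow_pos (M n : ℕ) : 0 < pellWindow (M + 2) n :=
  (pell_pos (by omega)).trans_le (pell_le_pellWindow n (i := 1) (by omega))

theorem pellWindow_succ_add (L n : ℕ) :
    pellWindow L (n + 1) + pell n = pellWindow L n + pell (n + L) := by
  have := (sum_range_succ' (fun i => pell (n + i)) L).symm.trans
    (sum_range_succ (fun i => pell (n + i)) L)
  simp only [pellWindow, add_right_comm n 1]
  simpa only [← add_assoc, add_zero] using this

theorem two_mul_pellWindow_add (M n : ℕ) :
    2 * pellWindow (M + 1) n + pell (n + 1) = pell n + pell (n + M) + pell (n + M + 1) := by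
  induction M with
  | zero => simp [pellWindow]; ring
  | succ M ih =>
    rw [pellWindow, sum_range_succ, ← pellWindow, show n + (M + 1) + 1 = n + M + 2 by omega,
      pell_add_two]
    simp only [← add_assoc]
    omega

theorem two_mul_pellWindow_zero_add_one (M : ℕ) :
    2 * pellWindow (M + 1) 0 + 1 = pell M + pell (M + 1) := by
  simpa using two_mul_pellWindow_add M 0

theorem two_mul_pellWindow_one_add_one (M : ℕ) :
    2 * pellWindow (M + 1) 1 + 1 = pell (M + 1) + pell (M + 2) := by
  have := two_mul_pellWindow_add M 1
  rw [show 1 + M + 1 = M + 2 by omega, show 1 + M = M + 1 by omega, pell_one,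
    show pell 2 = 2 from rfl] at this
  omega

theorem pellWindow_lt_pell (M n : ℕ) : pellWindow (M + 1) n < pell (n + M + 1) := by
  have := two_mul_pellWindow_add M n
  have := pell_strictMono (Nat.lt_add_one n)
  have := pell_strictMono (Nat.lt_add_one (n + M))
  omega

theorem pellWindow_lt_pellWindow_succ {L : ℕ} (hL : 0 < L) (n : ℕ) :
    pellWindow L n < pellWindow L (n + 1) :=
  sum_lt_sum_of_nonempty (nonempty_range_iff.2 hL.ne') fun i _ =>
    pell_strictMono (by omega)

theorem pellWindow_succ_le (M n : ℕ) :
    pellWindow (M + 2) (n + 1) ≤ 4 * pellWindow (M + 2) n := by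
  have hshift := pellWindow_succ_add (M + 2) n
  have hlast := pell_add_two_le (n + M)
  have hterm := pell_le_pellWindow n (show M + 1 < M + 2 by omega)
  rw [show n + (M + 2) = n + M + 2 by omega] at hshift
  rw [← add_assoc] at hterm
  omega

theorem index_succ_of_mul_pell_eq_pellWindow {M n a b c : ℕ}
    (ha : pellWindow (M + 2) n = c * pell a) (hb : pellWindow (M + 2) (n + 1) = c * pell b) :
    b = a + 1 := by
  have hlt : a < b := by
    have := pellWindow_lt_pellWindow_succ (by omega : 0 < M + 2) n
    rw [ha, hb] at this
    exact pell_strictMono.lt_iff_lt.1 (lt_of_mul_lt_mul_left this (Nat.zero_le c))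
  by_contra hne
  have h5 : 5 * pell a ≤ pell b :=
    (five_mul_pell_le a).trans (pell_strictMono.monotone (by omega))
  have := pellWindow_succ_le M n
  have := pellWindow_pos M n
  rw [ha, hb] at *
  nlinarith

theorem pell_add_one_casoratian (a b : ℕ) :
    (pell (a + 1) : ℤ) * (pell (a + b) + pell (a + b + 1))
      - pell a * (pell (a + b + 1) + pell (a + b + 2))
      = (-1) ^ a * (pell b + pell (b + 1)) := by
  have hrec : ∀ n, (pell (n + 2) : ℤ) = 2 * pell (n + 1) + 1 * pell n := fun n => by
    simp [pell_add_two]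
  have := casoratian_of_recurrence (x := fun n => (pell n : ℤ))
    (y := fun n => (pell n : ℤ) + pell (n + 1)) hrec (fun n => by simp only [hrec]; ring) a b
  simpa [pell] using this

theorem pell_add_pell_succ_eq_neg_one_pow_mul {a b c : ℕ}
    (h0 : 2 * (c * pell (a + 1)) + 1 = pell (a + 1 + b) + pell (a + 1 + b + 1))
    (h1 : 2 * (c * pell (a + 2)) + 1 = pell (a + 1 + b + 1) + pell (a + 1 + b + 2)) :
    (pell a + pell (a + 1) : ℤ) = (-1) ^ (a + 1) * (pell b + pell (b + 1)) := by
  have hrec : (pell (a + 2) : ℤ) = 2 * pell (a + 1) + pell a := by simp [pell_add_two]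
  have h0' : (pell (a + 1 + b) + pell (a + 1 + b + 1) : ℤ) = 2 * (c * pell (a + 1)) + 1 := by
    exact_mod_cast h0.symm
  have h1' : (pell (a + 1 + b + 1) + pell (a + 1 + b + 2) : ℤ) = 2 * (c * pell (a + 2)) + 1 := by
    exact_mod_cast h1.symm
  linear_combination pell_add_one_casoratian (a + 1) b - pell (a + 2) * h0' + pell (a + 1) * h1'
    - hrec

theorem not_mul_pell_eq_pellWindow {N c m : ℕ} (hN : 1 ≤ N)
    (h0 : pellWindow (2 * N + 1) 0 = c * pell m)
    (h1 : pellWindow (2 * N + 1) 1 = c * pell (m + 1)) : False := by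
  have hpos : 0 < c * pell m := h0 ▸ pell_le_pellWindow 0 (i := 1) (by omega)
  have hc : 0 < c := Nat.pos_of_ne_zero (by rintro rfl; simp at hpos)
  obtain ⟨a, rfl⟩ : ∃ a, m = a + 1 :=
    Nat.exists_eq_add_one.2 (Nat.pos_of_ne_zero (by rintro rfl; simp at hpos))
  obtain ⟨b, hb⟩ : ∃ b, 2 * N = a + 1 + b := by
    have hle : pell (a + 1) ≤ c * pell (a + 1) := Nat.le_mul_of_pos_left _ hc
    have := pell_strictMono.lt_iff_lt.1 (hle.trans_lt (h0 ▸ pellWindow_lt_pell (2 * N) 0))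
    exact ⟨2 * N - (a + 1), by omega⟩
  have hH := pell_add_pell_succ_eq_neg_one_pow_mul
    (hb ▸ h0 ▸ two_mul_pellWindow_zero_add_one (2 * N))
    (hb ▸ h1 ▸ two_mul_pellWindow_one_add_one (2 * N))
  rcases Nat.even_or_odd a with ha | ha
  · rw [ha.add_one.neg_one_pow] at hH
    have := pell_pos (n := a + 1) (by omega)
    omega
  · rw [ha.add_one.neg_one_pow, one_mul] at hH
    have hHmono : StrictMono fun k => pell k + pell (k + 1) := fun _ _ h =>
      add_lt_add (pell_strictMono h) (pell_strictMono (by omega))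
    have hab : a = b := hHmono.injective (by exact_mod_cast hH)
    obtain ⟨k, rfl⟩ := ha
    omega

theorem pell_odd_sum_not_multiple (P : ℕ → ℕ)
    (h0 : P 0 = 0) (h1 : P 1 = 1)
    (hrec : ∀ n, P (n + 2) = 2 * P (n + 1) + P n)
    (N : ℕ) (hN : 1 ≤ N) :
    ¬ ∃ (c : ℕ) (j : ℕ → ℕ), 0 < c ∧
      ∀ n, (∑ i ∈ Finset.range (2 * N + 1), P (n + i)) = c * P (j n) := by
  obtain rfl := eq_pell h0 h1 hrec
  rintro ⟨c, j, -, hj⟩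
  obtain ⟨M, rfl⟩ : ∃ M, N = M + 1 := ⟨N - 1, by omega⟩
  have hj1 : j 1 = j 0 + 1 := index_succ_of_mul_pell_eq_pellWindow (M := 2 * M + 1) (hj 0) (hj 1)
  exact not_mul_pell_eq_pellWindow hN (hj 0) (hj1 ▸ hj 1)
end

section
/- For all n ≥ 0 and N ≥ 1, P(n+2N) < ∑_{i=0}^{2N} P(n+i) < P(n+2N+1), where P is the Pell sequence; in particular, the sum of an odd number 2N+1 ≥ 3 of consecutive Pell numbers is strictly between two consecutive Pell numbers and hence is never itself a Pell number. -/
open Finset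

variable {P : ℕ → ℕ}

lemma pos_succ_of_pell_rec (h1 : 0 < P 1) (hrec : ∀ n, P (n + 2) = 2 * P (n + 1) + P n) :
    ∀ m, 0 < P (m + 1)
  | 0 => h1
  | m + 1 => by
    have := pos_succ_of_pell_rec h1 hrec m
    rw [hrec]
    omega

lemma sum_range_two_mul_succ_add_one (f : ℕ → ℕ) (N : ℕ) :
    ∑ i ∈ range (2 * (N + 1) + 1), f i =
      ∑ i ∈ range (2 * N + 1), f i + f (2 * N + 1) + f (2 * N + 2) := by
  rw [show 2 * (N + 1) + 1 = 2 * N + 1 + 1 + 1 by ring, sum_range_succ, sum_range_succ]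

/-- The last two terms of the sum are `P (n + 2 * N - 1) > 0` and `P (n + 2 * N)`. -/
lemma lt_sum_range_two_mul_add_one (h1 : 0 < P 1)
    (hrec : ∀ n, P (n + 2) = 2 * P (n + 1) + P n) (n N : ℕ) (hN : 1 ≤ N) :
    P (n + 2 * N) < ∑ i ∈ range (2 * N + 1), P (n + i) := by
  obtain ⟨M, rfl⟩ : ∃ M, N = M + 1 := ⟨N - 1, by omega⟩
  have hpos := pos_succ_of_pell_rec h1 hrec (n + 2 * M)
  rw [sum_range_two_mul_succ_add_one, show n + 2 * (M + 1) = n + (2 * M + 2) by ring,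
    show n + (2 * M + 1) = n + 2 * M + 1 by ring]
  omega

lemma sum_range_two_mul_add_one_lt (h1 : 0 < P 1)
    (hrec : ∀ n, P (n + 2) = 2 * P (n + 1) + P n) (n N : ℕ) (hN : 1 ≤ N) :
    ∑ i ∈ range (2 * N + 1), P (n + i) < P (n + 2 * N + 1) := by
  induction N, hN using Nat.le_induction with
  | base =>
    have := pos_succ_of_pell_rec h1 hrec n
    have := hrec n
    have := hrec (n + 1)
    simp only [sum_range_succ, range_one, sum_singleton]
    ring_nf at *
    omega
  | succ N _ ih =>
    -- With `a = n + 2 * N`, two more terms add `P (a + 1) + P (a + 2) < P (a + 3) - P (a + 1)`.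
    have := pos_succ_of_pell_rec h1 hrec (n + 2 * N)
    have := hrec (n + 2 * N + 1)
    have := hrec (n + 2 * N)
    rw [sum_range_two_mul_succ_add_one]
    ring_nf at *
    omega

theorem pell_odd_sum_between_general (P : ℕ → ℕ)
    (h1 : P 1 = 1)
    (hrec : ∀ n, P (n + 2) = 2 * P (n + 1) + P n)
    (n N : ℕ) (hN : 1 ≤ N) :
    P (n + 2 * N) < (∑ i ∈ Finset.range (2 * N + 1), P (n + i)) ∧
    (∑ i ∈ Finset.range (2 * N + 1), P (n + i)) < P (n + 2 * N + 1) :=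
  have hP1 : 0 < P 1 := by omega
  ⟨lt_sum_range_two_mul_add_one hP1 hrec n N hN, sum_range_two_mul_add_one_lt hP1 hrec n N hN⟩

theorem pell_odd_sum_between (P : ℕ → ℕ)
    (h0 : P 0 = 0) (h1 : P 1 = 1)
    (hrec : ∀ n, P (n + 2) = 2 * P (n + 1) + P n)
    (n N : ℕ) (hN : 1 ≤ N) :
    P (n + 2 * N) < (∑ i ∈ Finset.range (2 * N + 1), P (n + i)) ∧
    (∑ i ∈ Finset.range (2 * N + 1), P (n + i)) < P (n + 2 * N + 1) :=
  pell_odd_sum_between_general P h1 hrec n N hN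
end

section
/- Define the generalized Pell (k,k-1)-numbers by p(n)=2p(n-1)+p(n-k-1) for n ≥ k+1, with p(0)=...=p(k-1)=0 and p(k)=1. Then for all k ≥ 1 and n ≥ k, ∑_{i=0}^{2k+1} p(n+i) = 4·p(n+2k). -/
/-!
Let `W m = p m + ⋯ + p (m + k)`. Summing the recurrence `p (m + k + 1) = 2 p (m + k) + p m`
over a window gives `W (n + k + 1) = 2 W (n + k) + W n`, while sliding the window telescopes:
`W (n + k + 1) - W (n + k) = p (n + 2k + 1) - p (n + k) = 2 p (n + 2k)`.
Hence `W n + W (n + k + 1) = 2 (W (n + k + 1) - W (n + k)) = 4 p (n + 2k)`.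
-/

open Finset

section WindowSum

variable {M : Type*} [AddCommMonoid M] (p : ℕ → M) (k : ℕ)

def windowSum (m : ℕ) : M := ∑ i ∈ range (k + 1), p (m + i)

theorem windowSum_add_eq_windowSum_succ_add (m : ℕ) :
    windowSum p k m + p (m + k + 1) = windowSum p k (m + 1) + p m := by
  have h := sum_range_succ' (fun i => p (m + i)) (k + 1)
  rw [sum_range_succ, add_zero] at h
  simpa only [windowSum, ← add_assoc, add_right_comm m _ 1] using h

theorem sum_range_two_mul_add_two_eq_windowSum_add (n : ℕ) :
    ∑ i ∈ range (2 * k + 2), p (n + i) = windowSum p k n + windowSum p k (n + k + 1) := by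
  rw [show 2 * k + 2 = (k + 1) + (k + 1) by ring, sum_range_add]
  simp only [windowSum, add_assoc]

variable {p k}

theorem windowSum_of_rec (hrec : ∀ m, p (m + k + 1) = 2 • p (m + k) + p m) (n : ℕ) :
    windowSum p k (n + k + 1) = 2 • windowSum p k (n + k) + windowSum p k n := by
  simp only [windowSum, smul_sum, ← sum_add_distrib]
  refine sum_congr rfl fun i _ => ?_
  simpa only [add_right_comm _ i] using hrec (n + i)

end WindowSum

theorem sum_range_two_mul_add_two_eq_four_smul {M : Type*} [AddCancelCommMonoid M]
    {p : ℕ → M} {k : ℕ} (hrec : ∀ m, p (m + k + 1) = 2 • p (m + k) + p m) (n : ℕ) :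
    ∑ i ∈ range (2 * k + 2), p (n + i) = 4 • p (n + 2 * k) := by
  have hslide : windowSum p k (n + k + 1) = windowSum p k (n + k) + 2 • p (n + k + k) :=
    add_right_cancel (b := p (n + k)) <| by
      rw [← windowSum_add_eq_windowSum_succ_add, hrec (n + k), ← add_assoc]
  rw [sum_range_two_mul_add_two_eq_windowSum_add, two_mul, ← add_assoc]
  refine add_left_cancel (a := 2 • windowSum p k (n + k)) ?_
  rw [← add_assoc, ← windowSum_of_rec hrec, hslide]
  abel

theorem gen_pell_sum_general (k : ℕ) (p : ℕ → ℕ)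
    (hrec : ∀ n, k + 1 ≤ n → p n = 2 * p (n - 1) + p (n - k - 1))
    (n : ℕ) :
    (∑ i ∈ Finset.range (2 * k + 2), p (n + i)) = 4 * p (n + 2 * k) := by
  have hrec' (m : ℕ) : p (m + k + 1) = 2 • p (m + k) + p m := by
    have h := hrec (m + k + 1) (by omega)
    rwa [show m + k + 1 - 1 = m + k by omega, show m + k + 1 - k - 1 = m by omega] at h
  exact sum_range_two_mul_add_two_eq_four_smul hrec' n

theorem gen_pell_sum (k : ℕ) (hk : 1 ≤ k) (p : ℕ → ℕ)
    (h0 : ∀ i, i < k → p i = 0) (hk1 : p k = 1)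
    (hrec : ∀ n, k + 1 ≤ n → p n = 2 * p (n - 1) + p (n - k - 1))
    (n : ℕ) (hn : k ≤ n) :
    (∑ i ∈ Finset.range (2 * k + 2), p (n + i)) = 4 * p (n + 2 * k) :=
  gen_pell_sum_general k p hrec n
end
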